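/- Let d ≥ 1 and k ≥ 1. The set of polynomials p ∈ ℝ[x_1,…,x_d] of total degree at most k satisfying Δp = Σ_{i=1}^d ∂²p/∂x_i² = 0 is a linear subspace of dimension C(d+k−1, k) + C(d+k−2, k−1), where C(n, m) denotes the binomial coefficient. -/

import Mathlib

/-!
For `k ≥ 2` the Laplacian maps the polynomials of total degree `≤ k` onto those of total
degree `≤ k - 2`, so by rank–nullity the harmonic ones have dimension
`dim P_{≤k} - dim P_{≤k-2} = dim P_k + dim P_{k-1}`, where `P_j`, the forms of degree `j`, has
dimension `C(d + j - 1, j)`. Surjectivity is proved degree by degree: on forms `q` of degree `n`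
Euler's identity gives `Δ (|x|² q) = (2d + 4n) q + |x|² Δq`, from which an induction on `n`
shows that `q ↦ Δ (|x|² q)` is injective, hence bijective on the finite-dimensional space `P_n`.
-/

open MvPolynomial Finset

namespace MvPolynomial

section CommRing

variable (σ R : Type*) [Fintype σ] [CommRing R]

noncomputable def laplacian : MvPolynomial σ R →ₗ[R] MvPolynomial σ R :=
  ∑ i, (pderiv i).toLinearMap ∘ₗ (pderiv i).toLinearMap

noncomputable def sumSqX : MvPolynomial σ R := ∑ i, X i ^ 2

variable {σ R}

theorem laplacian_apply (p : MvPolynomial σ R) :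
    laplacian σ R p = ∑ i, pderiv i (pderiv i p) := by
  simp [laplacian, LinearMap.sum_apply]

theorem isHomogeneous_sumSqX : (sumSqX σ R).IsHomogeneous 2 :=
  IsHomogeneous.sum _ _ _ fun _ _ => isHomogeneous_X_pow _ _

theorem pderiv_sumSqX (i : σ) : pderiv i (sumSqX σ R) = 2 * X i := by
  classical
  simp [sumSqX, map_sum, pderiv_X, Pi.single_apply, mul_comm]

theorem laplacian_sumSqX_mul (q : MvPolynomial σ R) :
    laplacian σ R (sumSqX σ R * q) =
      (2 * Fintype.card σ) • q + 4 • ∑ i, X i * pderiv i q +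
        sumSqX σ R * laplacian σ R q := by
  have h : ∀ i, pderiv i (pderiv i (sumSqX σ R * q)) =
      2 * q + 4 • (X i * pderiv i q) + sumSqX σ R * pderiv i (pderiv i q) := by
    intro i
    have hpderiv_two : pderiv i (2 : MvPolynomial σ R) = 0 := by
      exact_mod_cast (pderiv i).map_natCast 2
    simp only [Derivation.leibniz, pderiv_sumSqX, smul_eq_mul, map_add, pderiv_X_self, hpderiv_two]
    ring
  simp only [laplacian_apply, h, sum_add_distrib, sum_const, card_univ, ← smul_sum, ← mul_sum]
  rw [nsmul_eq_mul, nsmul_eq_mul]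
  push_cast
  ring

theorem isHomogeneous_laplacian {p : MvPolynomial σ R} {n : ℕ} (hp : p.IsHomogeneous n) :
    (laplacian σ R p).IsHomogeneous (n - 2) := by
  rw [laplacian_apply]
  exact IsHomogeneous.sum _ _ _ fun _ _ => by simpa [Nat.sub_sub] using hp.pderiv.pderiv

theorem IsHomogeneous.laplacian_eq_zero {p : MvPolynomial σ R} {n : ℕ} (hp : p.IsHomogeneous n)
    (hn : n < 2) : laplacian σ R p = 0 := by
  rw [laplacian_apply]
  refine sum_eq_zero fun i _ => ?_
  have h : (pderiv i p).IsHomogeneous 0 := by simpa [show n - 1 = 0 by omega] using hp.pderiv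
  rw [totalDegree_eq_zero_iff_eq_C.mp (Nat.le_zero.mp h.totalDegree_le), pderiv_C]

theorem IsHomogeneous.laplacian_sumSqX_mul {q : MvPolynomial σ R} {n : ℕ}
    (hq : q.IsHomogeneous n) :
    laplacian σ R (sumSqX σ R * q) =
      (2 * Fintype.card σ + 4 * n) • q + sumSqX σ R * laplacian σ R q := by
  rw [MvPolynomial.laplacian_sumSqX_mul, hq.sum_X_mul_pderiv, smul_smul, add_smul]

theorem IsHomogeneous.eq_zero_of_smul_add_sumSqX_mul_laplacian_eq_zero [IsDomain R] [CharZero R]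
    {q : MvPolynomial σ R} {n c : ℕ} (hq : q.IsHomogeneous n) (hc : c ≠ 0)
    (h : c • q + sumSqX σ R * laplacian σ R q = 0) : q = 0 := by
  induction n using Nat.strong_induction_on generalizing c q with
  | _ n ih =>
    have hΔ : laplacian σ R q = 0 := by
      rcases lt_or_ge n 2 with hn | hn
      · exact hq.laplacian_eq_zero hn
      · -- applying `Δ` shows that `Δq` satisfies the same equation, with a larger `c`
        have hΔq := isHomogeneous_laplacian hq
        refine ih (n - 2) (by omega) hΔq (c := c + (2 * Fintype.card σ + 4 * (n - 2)))
          (by omega) ?_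
        have := congrArg (laplacian σ R) h
        rwa [map_add, map_nsmul, hΔq.laplacian_sumSqX_mul, map_zero, ← add_assoc, ← add_smul]
          at this
    rw [hΔ, mul_zero, add_zero] at h
    exact (smul_eq_zero.mp h).resolve_left hc

theorem laplacian_mem_restrictTotalDegree {p : MvPolynomial σ R} {k : ℕ}
    (hp : p ∈ restrictTotalDegree σ R (k + 2)) :
    laplacian σ R p ∈ restrictTotalDegree σ R k := by
  rw [mem_restrictTotalDegree] at hp
  rw [← sum_homogeneousComponent p, map_sum]
  refine Submodule.sum_mem _ fun j hj => (mem_restrictTotalDegree _ _ _).mpr ?_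
  have := (isHomogeneous_laplacian (homogeneousComponent_isHomogeneous j p)).totalDegree_le
  grind

theorem laplacian_eq_zero_of_totalDegree_le_one {p : MvPolynomial σ R} (hp : p.totalDegree ≤ 1) :
    laplacian σ R p = 0 := by
  rw [← sum_homogeneousComponent p, map_sum]
  exact sum_eq_zero fun j hj =>
    (homogeneousComponent_isHomogeneous j p).laplacian_eq_zero (by grind)

theorem finrank_restrictTotalDegree [Nontrivial R] (k : ℕ) :
    Module.finrank R (restrictTotalDegree σ R k) =
      ∑ j ∈ range (k + 1), (Fintype.card σ + j - 1).choose j := by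
  classical
  have hsupport : {n : σ →₀ ℕ | (n.sum fun _ e => e) ≤ k} =
      ↑((range (k + 1)).biUnion fun j => (univ : Finset σ).finsuppAntidiag j) := by
    ext n
    simp [Finsupp.sum_fintype]
  rw [restrictTotalDegree, Module.finrank_eq_nat_card_basis (basisRestrictSupport R _), hsupport,
    Nat.card_coe_set_eq, Set.ncard_coe_finset, card_biUnion]
  · simp [card_finsuppAntidiag_nat_eq_choose]
  · intro i _ j _ hij
    exact disjoint_left.mpr fun f hi hj => hij ((mem_finsuppAntidiag.mp hi).1.symm.trans
      (mem_finsuppAntidiag.mp hj).1)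

end CommRing

section Field

variable {σ K : Type*} [Fintype σ] [Field K]

theorem exists_isHomogeneous_laplacian_eq [Nonempty σ] [CharZero K] {q : MvPolynomial σ K}
    {n : ℕ} (hq : q.IsHomogeneous n) :
    ∃ p : MvPolynomial σ K, p.IsHomogeneous (n + 2) ∧ laplacian σ K p = q := by
  have : Module.Finite K (homogeneousSubmodule σ K n) :=
    Module.Finite.iff_fg.mpr (homogeneousSubmodule_fg σ K n)
  let T : homogeneousSubmodule σ K n →ₗ[K] homogeneousSubmodule σ K n :=
    (laplacian σ K ∘ₗ LinearMap.mulLeft K (sumSqX σ K)).restrict fun u hu => by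
      simpa [mem_homogeneousSubmodule] using isHomogeneous_laplacian (isHomogeneous_sumSqX.mul hu)
  have hT : Function.Injective T := by
    refine (injective_iff_map_eq_zero T).mpr fun u hu => Subtype.ext ?_
    refine u.2.eq_zero_of_smul_add_sumSqX_mul_laplacian_eq_zero
      (c := 2 * Fintype.card σ + 4 * n) (by positivity) ?_
    rw [← IsHomogeneous.laplacian_sumSqX_mul u.2]
    simpa [T] using congrArg Subtype.val hu
  obtain ⟨u, hu⟩ := LinearMap.injective_iff_surjective.mp hT ⟨q, hq⟩
  exact ⟨sumSqX σ K * u, by simpa [add_comm] using isHomogeneous_sumSqX.mul u.2,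
    by simpa [T] using congrArg Subtype.val hu⟩

theorem map_laplacian_restrictTotalDegree [Nonempty σ] [CharZero K] (k : ℕ) :
    (restrictTotalDegree σ K (k + 2)).map (laplacian σ K) = restrictTotalDegree σ K k := by
  refine le_antisymm (Submodule.map_le_iff_le_comap.mpr fun p hp =>
    laplacian_mem_restrictTotalDegree hp) fun q hq => ?_
  rw [mem_restrictTotalDegree] at hq
  rw [← sum_homogeneousComponent q]
  refine Submodule.sum_mem _ fun j hj => ?_
  obtain ⟨p, hp, hpq⟩ :=
    exists_isHomogeneous_laplacian_eq (homogeneousComponent_isHomogeneous j q)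
  refine ⟨p, (mem_restrictTotalDegree _ _ _).mpr (hp.totalDegree_le.trans ?_), hpq⟩
  grind

theorem finrank_restrictTotalDegree_inf_ker_laplacian_add [Nonempty σ] [CharZero K] (k : ℕ) :
    Module.finrank K ↥(restrictTotalDegree σ K (k + 2) ⊓ LinearMap.ker (laplacian σ K)) +
      Module.finrank K (restrictTotalDegree σ K k) =
      Module.finrank K (restrictTotalDegree σ K (k + 2)) := by
  set V := restrictTotalDegree σ K (k + 2)
  have h := LinearMap.finrank_range_add_finrank_ker ((laplacian σ K).domRestrict V)
  rw [LinearMap.range_domRestrict, map_laplacian_restrictTotalDegree, LinearMap.ker_domRestrict,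
    ← Submodule.finrank_map_subtype_eq, Submodule.map_comap_subtype] at h
  omega

end Field

end MvPolynomial

/-- The set of polynomials of total degree at most `k` in `d` variables that are annihilated
by the formal Laplacian is a linear subspace of dimension
`C(d+k-1, k) + C(d+k-2, k-1)`. -/
theorem stmt8 (d k : ℕ) (hd : 1 ≤ d) (hk : 1 ≤ k) :
    ∃ S : Submodule ℝ (MvPolynomial (Fin d) ℝ),
      (S : Set (MvPolynomial (Fin d) ℝ)) =
        {p : MvPolynomial (Fin d) ℝ |
          p.totalDegree ≤ k ∧ (∑ i : Fin d, pderiv i (pderiv i p)) = 0} ∧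
      Module.finrank ℝ S = Nat.choose (d + k - 1) k + Nat.choose (d + k - 2) (k - 1) := by
  have : Nonempty (Fin d) := ⟨⟨0, hd⟩⟩
  refine ⟨restrictTotalDegree (Fin d) ℝ k ⊓ LinearMap.ker (laplacian (Fin d) ℝ), ?_, ?_⟩
  · ext p
    simp [mem_restrictTotalDegree, laplacian_apply]
  obtain rfl | ⟨m, rfl⟩ : k = 1 ∨ ∃ m, k = m + 2 :=
    hk.eq_or_lt.imp Eq.symm fun h => ⟨k - 2, by omega⟩
  · rw [inf_eq_left.mpr fun p hp => laplacian_eq_zero_of_totalDegree_le_one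
      ((mem_restrictTotalDegree _ _ _).mp hp), finrank_restrictTotalDegree]
    simp [sum_range_succ, add_comm]
  · have h := finrank_restrictTotalDegree_inf_ker_laplacian_add (σ := Fin d) (K := ℝ) m
    rw [finrank_restrictTotalDegree, finrank_restrictTotalDegree, sum_range_succ _ (m + 2),
      sum_range_succ _ (m + 1)] at h
    rw [show d + (m + 2) - 2 = d + (m + 1) - 1 by omega, show m + 2 - 1 = m + 1 by omega]
    simp only [Fintype.card_fin] at h
    omega
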